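/- arXiv:2504.11185 — 3 statements merged into one kernel-verified Lean document; each statement's English description precedes it below -/
import Mathlib

section
/- Let n ≥ 2 and 2 ≤ q < ∞. Let (c^S_j)_{j=1,…,q} ⊂ ℝⁿ × ℝ and (k^S_j)_{j=1,…,q} ⊂ ℝ, write c^S_j = (c̲_j, (c₀)_j), and define c^H_j = (c̲_j, −k^S_j) ∈ ℝⁿ × ℝ and k^H_j = −(c₀)_j. Then for every i ∈ {1,…,q}: {y ∈ ℍⁿ : π_ℍ(y) lies in {p ∈ Sⁿ₊ : ⟨c^S_i, p⟩ + k^S_i < ⟨c^S_j, p⟩ + k^S_j for all j ≠ i}} = {y ∈ ℍⁿ : ⟨c^H_i, y⟩₁ − k^H_i < ⟨c^H_j, y⟩₁ − k^H_j for all j ≠ i}. -/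
open scoped RealInnerProductSpace

/-- The Minkowski inner product on `ℝⁿ × ℝ ≅ ℝ^{n,1}`:
`⟨x, y⟩₁ = ⟨x̲, y̲⟩ - x₀ y₀`. -/
noncomputable def minkInner {n : ℕ} (x y : EuclideanSpace ℝ (Fin n) × ℝ) : ℝ :=
  ⟪x.1, y.1⟫ - x.2 * y.2

/-- The Euclidean inner product on `ℝⁿ × ℝ ≅ ℝ^{n+1}`. -/
noncomputable def euclInner {n : ℕ} (x y : EuclideanSpace ℝ (Fin n) × ℝ) : ℝ :=
  ⟪x.1, y.1⟫ + x.2 * y.2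

/-- The hyperboloid model of hyperbolic space:
`ℍⁿ = {y : ⟨y,y⟩₁ = -1, y₀ > 0}`. -/
noncomputable def Hyperboloid (n : ℕ) : Set (EuclideanSpace ℝ (Fin n) × ℝ) :=
  {y | minkInner y y = -1 ∧ 0 < y.2}

/-- The stereographic projection `π_ℍ(y) = (y̲, 1)/y₀`. -/
noncomputable def stereoH {n : ℕ} (y : EuclideanSpace ℝ (Fin n) × ℝ) :
    EuclideanSpace ℝ (Fin n) × ℝ := (y.2⁻¹ • y.1, y.2⁻¹)

/-- The unit sphere `Sⁿ ⊂ ℝⁿ × ℝ ≅ ℝ^{n+1}` (described via the squared norm). -/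
noncomputable def UnitSphere (n : ℕ) : Set (EuclideanSpace ℝ (Fin n) × ℝ) :=
  {p | ‖p.1‖ ^ 2 + p.2 ^ 2 = 1}

/-- The stereographic projection
`π_ℝ(x) = (2x/(|x|²+1), (|x|²−1)/(|x|²+1))`. -/
noncomputable def stereoR {n : ℕ} (x : EuclideanSpace ℝ (Fin n)) :
    EuclideanSpace ℝ (Fin n) × ℝ :=
  ((‖x‖ ^ 2 + 1)⁻¹ • ((2 : ℝ) • x), (‖x‖ ^ 2 - 1) / (‖x‖ ^ 2 + 1))

/- Since `|y̲|² = y₀² - 1` on `ℍⁿ`, `π_ℍ` maps `ℍⁿ` into `Sⁿ₊`, so only the cell inequalities matter.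
Each of them pulls back to a hyperbolic one multiplied by the positive factor `1 / y₀`:
`⟨(a̲, a₀), π_ℍ y⟩ + κ = (⟨(a̲, -κ), y⟩₁ + a₀) / y₀`. -/

theorem stereoH_mem_unitSphere {n : ℕ} {y : EuclideanSpace ℝ (Fin n) × ℝ}
    (hy : y ∈ Hyperboloid n) : stereoH y ∈ UnitSphere n := by
  obtain ⟨hyy, hy0⟩ := hy
  have hnorm : ‖y.1‖ ^ 2 = y.2 ^ 2 - 1 := by
    rw [minkInner, real_inner_self_eq_norm_sq] at hyy
    linarith
  simp only [UnitSphere, stereoH, Set.mem_ofPred_eq, norm_smul, mul_pow, norm_inv,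
    Real.norm_eq_abs, abs_of_pos hy0, hnorm]
  field_simp
  ring

theorem euclInner_stereoH_add {n : ℕ} (a : EuclideanSpace ℝ (Fin n)) (a0 κ : ℝ)
    {y : EuclideanSpace ℝ (Fin n) × ℝ} (hy : y.2 ≠ 0) :
    euclInner (a, a0) (stereoH y) + κ = (minkInner (a, -κ) y - -a0) / y.2 := by
  simp only [euclInner, minkInner, stereoH, real_inner_smul_right]
  field_simp
  ring

theorem euclInner_stereoH_add_lt_iff {n : ℕ} (a b : EuclideanSpace ℝ (Fin n))
    (a0 b0 κ μ : ℝ) {y : EuclideanSpace ℝ (Fin n) × ℝ} (hy : 0 < y.2) :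
    euclInner (a, a0) (stereoH y) + κ < euclInner (b, b0) (stereoH y) + μ ↔
      minkInner (a, -κ) y - -a0 < minkInner (b, -μ) y - -b0 := by
  rw [euclInner_stereoH_add _ _ _ hy.ne', euclInner_stereoH_add _ _ _ hy.ne',
    div_lt_div_iff_of_pos_right hy]

theorem statement7_general (n : ℕ) (q : ℕ)
    (c : Fin q → EuclideanSpace ℝ (Fin n)) (c0 k : Fin q → ℝ) (i : Fin q) :
    {y | y ∈ Hyperboloid n ∧
        stereoH y ∈ {p : EuclideanSpace ℝ (Fin n) × ℝ |
          p ∈ UnitSphere n ∧ 0 < p.2 ∧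
          ∀ j, j ≠ i →
            euclInner (c i, c0 i) p + k i < euclInner (c j, c0 j) p + k j}}
      = {y | y ∈ Hyperboloid n ∧
          ∀ j, j ≠ i →
            minkInner (c i, -(k i)) y - (-(c0 i))
              < minkInner (c j, -(k j)) y - (-(c0 j))} := by
  ext y
  refine and_congr_right fun hy => ?_
  have hy0 : 0 < y.2 := hy.2
  simp only [Set.mem_ofPred_eq, euclInner_stereoH_add_lt_iff _ _ _ _ _ _ hy0]
  exact ⟨fun h => h.2.2, fun h => ⟨stereoH_mem_unitSphere hy, inv_pos.mpr hy0, h⟩⟩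

/-- with `c^H_j = (c̲_j, -k^S_j)` and `k^H_j = -(c₀)_j`, the
preimage under `π_ℍ` of the spherical Voronoi cell
`{p ∈ Sⁿ₊ : ⟨c^S_i, p⟩ + k^S_i < ⟨c^S_j, p⟩ + k^S_j ∀ j ≠ i}` equals
`{y ∈ ℍⁿ : ⟨c^H_i, y⟩₁ - k^H_i < ⟨c^H_j, y⟩₁ - k^H_j ∀ j ≠ i}`. -/
theorem statement7 (n : ℕ) (hn : 2 ≤ n) (q : ℕ) (hq : 2 ≤ q)
    (c : Fin q → EuclideanSpace ℝ (Fin n)) (c0 k : Fin q → ℝ) (i : Fin q) :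
    {y | y ∈ Hyperboloid n ∧
        stereoH y ∈ {p : EuclideanSpace ℝ (Fin n) × ℝ |
          p ∈ UnitSphere n ∧ 0 < p.2 ∧
          ∀ j, j ≠ i →
            euclInner (c i, c0 i) p + k i < euclInner (c j, c0 j) p + k j}}
      = {y | y ∈ Hyperboloid n ∧
          ∀ j, j ≠ i →
            minkInner (c i, -(k i)) y - (-(c0 i))
              < minkInner (c j, -(k j)) y - (-(c0 j))} :=
  statement7_general n q c c0 k i
end

section
/- Let n ≥ 2. Let ξ = (ξ̲, ξ₀) ∈ ℝⁿ × ℝ with ξ₀ ≠ 1, and set θ = ξ̲/(1 − ξ₀), η = (1 + ξ₀)/(2(1 − ξ₀)), and V(x) = |x|²/2 − ⟨x, θ⟩ + η for x ∈ ℝⁿ. Let c^S = (c̲, c₀) ∈ ℝⁿ × ℝ and k^S ∈ ℝ satisfy ⟨c^S, ξ⟩ + k^S = 0, and define c^R = c̲ and k^R = k^S + c₀. Then every x ∈ ℝⁿ satisfying k^R·|x|² + 2⟨c^R, x⟩ + 2k^S − k^R = 0 satisfies ⟨x − θ, c^R + k^R·x⟩ = k^R·V(x). (Since the gradient of V at x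 is x − θ and c^R + k^R·x is the normal direction of the interface sphere at x, this says that the normal derivative of V equals k^R·V on the interface, i.e. V satisfies the conformal boundary condition.) -/
open scoped RealInnerProductSpace

section Potential

variable {E : Type*} [NormedAddCommGroup E] [InnerProductSpace ℝ E]

-- The paper's `V`; its gradient is `x - θ`.
noncomputable def quadraticPotential (θ : E) (η : ℝ) (x : E) : ℝ :=
  ‖x‖ ^ 2 / 2 - ⟪x, θ⟫ + η

theorem inner_sub_add_smul_sub_mul_quadraticPotential (θ c x : E) (η k : ℝ) :
    ⟪x - θ, c + k • x⟫ - k * quadraticPotential θ η x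
      = (⟪c, x⟫ + k * ‖x‖ ^ 2 / 2) - (⟪c, θ⟫ + k * η) := by
  simp only [quadraticPotential, inner_sub_left, inner_add_right, inner_smul_right,
    real_inner_self_eq_norm_sq, real_inner_comm x c, real_inner_comm x θ, real_inner_comm θ c]
  ring

theorem inner_add_mul_norm_sq_div_two_eq_of_eq_zero (c x : E) (c0 kS : ℝ)
    (hx : (kS + c0) * ‖x‖ ^ 2 + 2 * ⟪c, x⟫ + 2 * kS - (kS + c0) = 0) :
    ⟪c, x⟫ + (kS + c0) * ‖x‖ ^ 2 / 2 = (c0 - kS) / 2 := by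
  linear_combination hx / 2

theorem inner_smul_add_mul_div_eq_of_inner_add_eq_zero (c xi : E) (xi0 c0 kS : ℝ) (hxi : xi0 ≠ 1)
    (hflat : ⟪c, xi⟫ + c0 * xi0 + kS = 0) :
    ⟪c, (1 - xi0)⁻¹ • xi⟫ + (kS + c0) * ((1 + xi0) / (2 * (1 - xi0))) = (c0 - kS) / 2 := by
  have h : (1 : ℝ) - xi0 ≠ 0 := sub_ne_zero.2 hxi.symm
  rw [inner_smul_right]
  field_simp
  linear_combination 2 * hflat

end Potential

theorem statement10_general (n : ℕ)
    (xi : EuclideanSpace ℝ (Fin n)) (xi0 : ℝ) (hxi : xi0 ≠ 1)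
    (c : EuclideanSpace ℝ (Fin n)) (c0 kS : ℝ)
    (hflat : euclInner (c, c0) (xi, xi0) + kS = 0)
    (x : EuclideanSpace ℝ (Fin n))
    (hx : (kS + c0) * ‖x‖ ^ 2 + 2 * ⟪c, x⟫ + 2 * kS - (kS + c0) = 0) :
    ⟪x - (1 - xi0)⁻¹ • xi, c + (kS + c0) • x⟫
      = (kS + c0) * (‖x‖ ^ 2 / 2 - ⟪x, (1 - xi0)⁻¹ • xi⟫
          + (1 + xi0) / (2 * (1 - xi0))) := by
  have hflat' : ⟪c, xi⟫ + c0 * xi0 + kS = 0 := hflat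
  refine sub_eq_zero.1 <| (inner_sub_add_smul_sub_mul_quadraticPotential _ c x _ _).trans ?_
  rw [inner_add_mul_norm_sq_div_two_eq_of_eq_zero c x c0 kS hx,
    inner_smul_add_mul_div_eq_of_inner_add_eq_zero c xi xi0 c0 kS hxi hflat', sub_self]

/-- with `θ = ξ̲/(1-ξ₀)`, `η = (1+ξ₀)/(2(1-ξ₀))`,
`V(x) = |x|²/2 - ⟨x,θ⟩ + η`, `c^R = c̲`, `k^R = k^S + c₀`, if `⟨c^S,ξ⟩ + k^S = 0`
then every `x` with `k^R |x|² + 2⟨c^R,x⟩ + 2k^S - k^R = 0` satisfies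
`⟨x - θ, c^R + k^R x⟩ = k^R V(x)` (the conformal boundary condition for `V`). -/
theorem statement10 (n : ℕ) (hn : 2 ≤ n)
    (xi : EuclideanSpace ℝ (Fin n)) (xi0 : ℝ) (hxi : xi0 ≠ 1)
    (c : EuclideanSpace ℝ (Fin n)) (c0 kS : ℝ)
    (hflat : euclInner (c, c0) (xi, xi0) + kS = 0)
    (x : EuclideanSpace ℝ (Fin n))
    (hx : (kS + c0) * ‖x‖ ^ 2 + 2 * ⟪c, x⟫ + 2 * kS - (kS + c0) = 0) :
    ⟪x - (1 - xi0)⁻¹ • xi, c + (kS + c0) • x⟫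
      = (kS + c0) * (‖x‖ ^ 2 / 2 - ⟪x, (1 - xi0)⁻¹ • xi⟫
          + (1 + xi0) / (2 * (1 - xi0))) :=
  statement10_general n xi xi0 hxi c c0 kS hflat x hx
end

section
/- Let n ≥ 2. Let ξ ∈ ℝ^{n+1} with |ξ| < 1, let c ∈ ℝ^{n+1} and k ∈ ℝ, and suppose that ⟨c, ξ⟩ + k = 0 and that ⟨c, p⟩ + k < 0 for every p ∈ Sⁿ with p₀ ≤ 0 (i.e. the closed southern hemisphere is contained in the open halfspace {x : ⟨c, x⟩ + k < 0}). Then ξ₀ > 0, where ξ₀ denotes the last coordinate of ξ. (This is the key step showing that every Möbius-flat spherical Voronoi cluster in ℍⁿ is epi-Möbius-flat.) -/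
open scoped RealInnerProductSpace

lemma exists_unit_orth (n : ℕ) (hn : 2 ≤ n) (x : EuclideanSpace ℝ (Fin n)) :
    ∃ e : EuclideanSpace ℝ (Fin n), ‖e‖ = 1 ∧ ⟪x, e⟫ = 0 := by
  have hspan : Module.finrank ℝ (ℝ ∙ x) ≤ 1 := by
    rcases eq_or_ne x 0 with h | h
    · rw [h, Submodule.span_zero_singleton, finrank_bot]
      omega
    · simp [finrank_span_singleton h]
  have hsum := Submodule.finrank_add_finrank_orthogonal (K := (ℝ ∙ x))
  rw [finrank_euclideanSpace_fin] at hsum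
  have hpos : 0 < Module.finrank ℝ ((ℝ ∙ x)ᗮ) := by omega
  have hne : (ℝ ∙ x)ᗮ ≠ ⊥ := by
    intro h
    rw [h] at hpos
    simp at hpos
  obtain ⟨v, hv, hv0⟩ := Submodule.exists_mem_ne_zero_of_ne_bot hne
  refine ⟨‖v‖⁻¹ • v, ?_, ?_⟩
  · simp [norm_smul, abs_of_nonneg, inv_mul_cancel₀ (norm_ne_zero_iff.2 hv0)]
  · have := (Submodule.mem_orthogonal _ v).1 hv x (Submodule.mem_span_singleton_self x)
    rw [inner_smul_right, this]
    ring

/-- if `|ξ| < 1`, `⟨c, ξ⟩ + k = 0`, and the closed southern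
hemisphere is contained in the open halfspace `{x : ⟨c, x⟩ + k < 0}`, then
`ξ₀ > 0`. -/
theorem statement18 (n : ℕ) (hn : 2 ≤ n)
    (xi c : EuclideanSpace ℝ (Fin n) × ℝ) (k : ℝ)
    (hxi : ‖xi.1‖ ^ 2 + xi.2 ^ 2 < 1)
    (hflat : euclInner c xi + k = 0)
    (hsouth : ∀ p : EuclideanSpace ℝ (Fin n) × ℝ,
      p ∈ UnitSphere n → p.2 ≤ 0 → euclInner c p + k < 0) :
    0 < xi.2 := by
  by_contra hle
  push_neg at hle
  obtain ⟨e, he1, he0⟩ := exists_unit_orth n hn xi.1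
  set r : ℝ := Real.sqrt (1 - ‖xi.1‖ ^ 2 - xi.2 ^ 2) with hr
  have hpos : 0 < 1 - ‖xi.1‖ ^ 2 - xi.2 ^ 2 := by linarith
  have hr2 : r ^ 2 = 1 - ‖xi.1‖ ^ 2 - xi.2 ^ 2 := Real.sq_sqrt hpos.le
  have hnorm : ∀ s : ℝ, ‖xi.1 + s • e‖ ^ 2 = ‖xi.1‖ ^ 2 + s ^ 2 := by
    intro s
    rw [norm_add_sq_real, inner_smul_right, he0, norm_smul, he1]
    simp [mul_pow]
  have hmem : ∀ s : ℝ, s ^ 2 = r ^ 2 →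
      ((xi.1 + s • e, xi.2) : EuclideanSpace ℝ (Fin n) × ℝ) ∈ UnitSphere n := by
    intro s hs
    simp only [UnitSphere, Set.mem_setOf_eq, hnorm, hs, hr2]
    ring
  have hp := hsouth (xi.1 + r • e, xi.2) (hmem r rfl) hle
  have hq := hsouth (xi.1 + (-r) • e, xi.2) (hmem (-r) (by ring)) hle
  have hsum : (euclInner c (xi.1 + r • e, xi.2) + k)
      + (euclInner c (xi.1 + (-r) • e, xi.2) + k) = 2 * (euclInner c xi + k) := by
    simp only [euclInner, inner_add_right, inner_smul_right]
    ring
  rw [hflat] at hsum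
  linarith
end
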